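/- arXiv:1511.02829 — 3 statements merged into one kernel-verified Lean document; each statement's English description precedes it below -/
import Mathlib

section
/- Let g be a function of strict partitions and μ a strict partition. Then for every nonnegative integer n, (D^n g)(μ) = Σ_{k=0}^{n} (−1)^{n+k} C(n,k) Σ_{λ: λ ⊇ μ, |λ|−|μ|=k} 2^{|λ|−|μ|−ℓ(λ)+ℓ(μ)} f_{λ/μ} g(λ). -/
open scoped BigOperators

/-- A strict partition: a strictly decreasing list of positive integers. -/
structure StrictPartition where
  parts : List ℕ
  pos : ∀ p ∈ parts, 0 < p
  sorted : parts.Pairwise (· > ·)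

namespace StrictPartition

/-- The `i`-th part (1-indexed); `0` for `i` beyond the length. -/
def part (lam : StrictPartition) (i : ℕ) : ℕ := lam.parts.getD (i - 1) 0

/-- The size `|λ|` of a strict partition. -/
def size (lam : StrictPartition) : ℕ := lam.parts.sum

/-- The length `ℓ(λ)` (number of parts) of a strict partition. -/
def length (lam : StrictPartition) : ℕ := lam.parts.length

/-- The cells of the shifted Young diagram: row `i` occupies columns `i+1, …, i+λᵢ`. -/
def cells (lam : StrictPartition) : Finset (ℕ × ℕ) :=
  (Finset.range (lam.size + lam.length + 2) ×ˢ
      Finset.range (lam.size + lam.length + 2)).filter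
    (fun b => 1 ≤ b.1 ∧ b.1 < b.2 ∧ b.2 ≤ b.1 + lam.part b.1)

/-- The content of a box `(i,j)` is `j - i`. -/
def content (b : ℕ × ℕ) : ℕ := b.2 - b.1

/-- The hook length of a box `(i,j)`: the number of boxes strictly below it in its
column, plus the number strictly to its right in its row, plus `1`, plus `λ_j`. -/
def hook (lam : StrictPartition) (b : ℕ × ℕ) : ℕ :=
  (lam.cells.filter (fun b' => b'.2 = b.2 ∧ b.1 < b'.1)).card +
  (lam.cells.filter (fun b' => b'.1 = b.1 ∧ b.2 < b'.2)).card + 1 + lam.part b.2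

/-- `H_λ`, the product of the hook lengths of all boxes of `λ`. -/
def H (lam : StrictPartition) : ℕ := ∏ b ∈ lam.cells, lam.hook b

/-- `μ ≤ λ` iff `μᵢ ≤ λᵢ` for all `i`. -/
instance : LE StrictPartition := ⟨fun mu lam => ∀ i, mu.part i ≤ lam.part i⟩

/-- The cells of the skew shifted diagram `λ/μ`. -/
def skewCells (mu lam : StrictPartition) : Finset (ℕ × ℕ) := lam.cells \ mu.cells

/-- `f_{λ/μ}`: the number of standard shifted Young tableaux of skew shape `λ/μ`,
i.e. bijective fillings of the cells of `λ/μ` with `0, 1, …, n-1` increasing along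
rows and columns. -/
noncomputable def fskew (mu lam : StrictPartition) : ℕ :=
  Nat.card {T : {b // b ∈ skewCells mu lam} → Fin (skewCells mu lam).card //
    Function.Bijective T ∧
    (∀ a b : {b // b ∈ skewCells mu lam},
      (a : ℕ × ℕ).1 = (b : ℕ × ℕ).1 → (a : ℕ × ℕ).2 < (b : ℕ × ℕ).2 → T a < T b) ∧
    (∀ a b : {b // b ∈ skewCells mu lam},
      (a : ℕ × ℕ).2 = (b : ℕ × ℕ).2 → (a : ℕ × ℕ).1 < (b : ℕ × ℕ).1 → T a < T b)}

/-- The empty strict partition. -/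
def empty : StrictPartition := ⟨[], by simp, List.Pairwise.nil⟩

/-- `f_λ`: the number of standard shifted Young tableaux of shape `λ`. -/
noncomputable def f (lam : StrictPartition) : ℕ := fskew empty lam

/-- `f'_{λ/μ} = 2^{|λ|-|μ|-ℓ(λ)+ℓ(μ)} f_{λ/μ}`. -/
noncomputable def fPrime (mu lam : StrictPartition) : ℚ :=
  (2 : ℚ) ^ ((lam.size : ℤ) - mu.size - lam.length + mu.length) * fskew mu lam

/-- `λ⁺` is obtained from `λ` by adding one box. -/
def AddBox (lam lam' : StrictPartition) : Prop := lam ≤ lam' ∧ lam'.size = lam.size + 1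

/-- The difference operator `D` for strict partitions. -/
noncomputable def D (g : StrictPartition → ℚ) (lam : StrictPartition) : ℚ :=
  (∑ᶠ nu ∈ {nu : StrictPartition | lam.AddBox nu ∧ lam.length < nu.length}, g nu) +
  2 * (∑ᶠ nu ∈ {nu : StrictPartition | lam.AddBox nu ∧ nu.length = lam.length}, g nu) -
  g lam

/-- The boxes that can be removed from `λ` leaving (the diagram of) a strict
partition: the outer corners. -/
def removableCells (lam : StrictPartition) : Set (ℕ × ℕ) :=
  {b | b ∈ lam.cells ∧ ∃ mu : StrictPartition, mu.cells = lam.cells.erase b}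

/-- The boxes that can be added to `λ` giving (the diagram of) a strict partition. -/
def addableCells (lam : StrictPartition) : Set (ℕ × ℕ) :=
  {b | b ∉ lam.cells ∧ ∃ mu : StrictPartition, mu.cells = insert b lam.cells}

/-- The contents `x_0 = 1 < x_1 < ⋯ < x_m` of the inner corners of `λ`. -/
def innerContents (lam : StrictPartition) : Set ℕ :=
  insert 1 (content '' lam.addableCells)

/-- The contents `y_1 < ⋯ < y_m` of the outer corners of `λ`. -/
def outerContents (lam : StrictPartition) : Set ℕ :=
  content '' lam.removableCells

/-- `q_k(λ) = ∑_{i=0}^m C(xᵢ,2)^k − ∑_{i=1}^m C(yᵢ,2)^k`. -/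
noncomputable def q (k : ℕ) (lam : StrictPartition) : ℚ :=
  (∑ᶠ c ∈ lam.innerContents, ((c.choose 2 : ℚ)) ^ k) -
  (∑ᶠ c ∈ lam.outerContents, ((c.choose 2 : ℚ)) ^ k)

/-- `q_ν(λ) = ∏_j q_{ν_j}(λ)` for a partition `ν` given as a multiset of parts. -/
noncomputable def qPart (nu : Multiset ℕ) (lam : StrictPartition) : ℚ :=
  (nu.map (fun k => q k lam)).prod

end StrictPartition

/-!
Write `D = U - 1`, where `U g(λ) = ∑_{λ⁺} 2^{1 - ℓ(λ⁺) + ℓ(λ)} g(λ⁺)`; by the binomial theorem in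
the endomorphism ring, `Dⁿ = ∑ₖ (-1)^{n+k} C(n,k) Uᵏ`, so it suffices to show
`Uᵏ g(μ) = ∑_{|λ/μ| = k} f'_{λ/μ} g(λ)`. The powers of two are multiplicative along chains
`μ ⊂ μ⁺ ⊆ λ`, and deleting the box numbered `0` from a standard shifted tableau of shape `λ/μ`
gives `f_{λ/μ} = ∑_{μ⁺ ⊆ λ} f_{λ/μ⁺}`, which is exactly the induction step.
-/

open Finset

theorem Module.End.sub_one_pow_apply {R M : Type*} [CommRing R] [AddCommGroup M] [Module R M]
    (f : Module.End R M) (n : ℕ) (x : M) :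
    ((f - 1) ^ n) x = ∑ k ∈ range (n + 1), ((-1 : R) ^ (n + k) * n.choose k) • (f ^ k) x := by
  have hc : Commute f (-1) := (Commute.one_right f).neg_right
  rw [sub_eq_add_neg, hc.add_pow, LinearMap.sum_apply]
  refine sum_congr rfl fun k hk => ?_
  have hsign : (-1 : R) ^ (n - k) = (-1) ^ (n + k) := by
    rw [mem_range] at hk
    rw [show n + k = n - k + 2 * k by omega, pow_add, pow_mul]; simp
  have : ((-1) ^ (n - k) * n.choose k : Module.End R M) =
      algebraMap R _ ((-1) ^ (n + k) * n.choose k) := by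
    rw [← hsign]; simp
  rw [mul_assoc, Module.End.mul_apply, this, Module.algebraMap_end_apply, map_smul]

section StandardNumbering

variable {α : Type*} (r : α → α → Prop)

def IsStandardNumbering (S : Finset α) (T : S → Fin S.card) : Prop :=
  Function.Bijective T ∧ ∀ a b : S, r a b → T a < T b

variable {r} {S : Finset α} {c : α}

theorem IsStandardNumbering.eq_of_val_eq {T : S → Fin S.card} (hT : IsStandardNumbering r S T)
    {a b : S} (h : (T a).val = (T b).val) : a.1 = b.1 :=
  congrArg Subtype.val (hT.1.1 (Fin.ext h))

theorem bijective_of_injective_numbering {T : S → Fin S.card} (hT : Function.Injective T) :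
    Function.Bijective T :=
  (Fintype.bijective_iff_injective_and_card T).2 ⟨hT, by simp⟩

theorem IsStandardNumbering.val_pos_of_ne {T : S → Fin S.card} (hT : IsStandardNumbering r S T)
    (hc : c ∈ S) (h0 : (T ⟨c, hc⟩).val = 0) {b : S} (hb : b.1 ≠ c) : 0 < (T b).val :=
  Nat.pos_of_ne_zero fun h => hb (hT.eq_of_val_eq (h.trans h0.symm))

theorem card_isStandardNumbering_empty :
    Nat.card {T // IsStandardNumbering r (∅ : Finset α) T} = 1 :=
  Nat.card_eq_one_iff_unique.2 ⟨⟨fun _ _ => Subtype.ext (funext isEmptyElim)⟩,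
    ⟨⟨isEmptyElim, bijective_of_injective_numbering fun a => isEmptyElim a, isEmptyElim⟩⟩⟩

variable [DecidableEq α]

def consNumbering (hc : c ∈ S) (T : S.erase c → Fin (S.erase c).card) (b : S) : Fin S.card :=
  if h : b.1 = c then ⟨0, card_pos.2 ⟨c, hc⟩⟩
  else (T ⟨b, mem_erase.2 ⟨h, b.2⟩⟩).succ.cast (card_erase_add_one hc)

theorem consNumbering_val (hc : c ∈ S) (T : S.erase c → Fin (S.erase c).card) (b : S) :
    (consNumbering hc T b).val =
      if h : b.1 = c then 0 else (T ⟨b, mem_erase.2 ⟨h, b.2⟩⟩).val + 1 := by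
  unfold consNumbering; split_ifs <;> simp

def tailNumbering (hc : c ∈ S) (T : S → Fin S.card) (b : S.erase c) : Fin (S.erase c).card :=
  ⟨(T ⟨b, mem_of_mem_erase b.2⟩).val - 1, by
    have := (T ⟨b, mem_of_mem_erase b.2⟩).isLt
    have := card_erase_add_one hc
    have := card_pos.2 ⟨b.1, b.2⟩
    omega⟩

theorem isStandardNumbering_consNumbering (hc : c ∈ S) (hmin : ∀ a ∈ S, ¬ r a c)
    {T : S.erase c → Fin (S.erase c).card} (hT : IsStandardNumbering r (S.erase c) T) :
    IsStandardNumbering r S (consNumbering hc T) := by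
  refine ⟨bijective_of_injective_numbering fun a b hab => Subtype.ext ?_, fun a b hab => ?_⟩
  · have h := congrArg Fin.val hab
    simp only [consNumbering_val] at h
    split_ifs at h with ha hb hb
    · exact ha.trans hb.symm
    · exact hT.eq_of_val_eq (a := ⟨a, mem_erase.2 ⟨ha, a.2⟩⟩) (b := ⟨b, mem_erase.2 ⟨hb, b.2⟩⟩)
        (by omega)
  · rw [Fin.lt_def, consNumbering_val, consNumbering_val]
    split_ifs with ha hb hb
    · exact absurd (hb ▸ hab) (hmin a a.2)
    · omega
    · exact absurd (hb ▸ hab) (hmin a a.2)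
    · exact Nat.succ_lt_succ (hT.2 ⟨a, mem_erase.2 ⟨ha, a.2⟩⟩ ⟨b, mem_erase.2 ⟨hb, b.2⟩⟩ hab)

theorem isStandardNumbering_tailNumbering (hc : c ∈ S) {T : S → Fin S.card}
    (hT : IsStandardNumbering r S T) (h0 : (T ⟨c, hc⟩).val = 0) :
    IsStandardNumbering r (S.erase c) (tailNumbering hc T) := by
  have hpos (b : S.erase c) : 0 < (T ⟨b, mem_of_mem_erase b.2⟩).val :=
    hT.val_pos_of_ne hc h0 (mem_erase.1 b.2).1
  refine ⟨bijective_of_injective_numbering fun a b hab => Subtype.ext ?_, fun a b hab => ?_⟩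
  · have h := congrArg Fin.val hab
    simp only [tailNumbering] at h
    have := hpos a; have := hpos b
    exact hT.eq_of_val_eq (a := ⟨a, mem_of_mem_erase a.2⟩) (b := ⟨b, mem_of_mem_erase b.2⟩)
      (by omega)
  · have := hT.2 ⟨a, mem_of_mem_erase a.2⟩ ⟨b, mem_of_mem_erase b.2⟩ hab
    have := hpos a
    simp only [tailNumbering, Fin.lt_def] at this ⊢
    omega

theorem card_isStandardNumbering_zero_eq (hc : c ∈ S) (hmin : ∀ a ∈ S, ¬ r a c) :
    Nat.card {T // IsStandardNumbering r S T ∧ (T ⟨c, hc⟩).val = 0} =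
      Nat.card {T // IsStandardNumbering r (S.erase c) T} := by
  symm
  refine Nat.card_eq_of_bijective
    (fun T => ⟨consNumbering hc T.1, isStandardNumbering_consNumbering hc hmin T.2,
      by simp [consNumbering_val]⟩) ⟨fun T₁ T₂ h => ?_, fun T => ?_⟩
  · refine Subtype.ext (funext fun b => Fin.ext ?_)
    have := congrArg (fun T => (T.1 ⟨b, mem_of_mem_erase b.2⟩).val) h
    simpa [consNumbering_val, (mem_erase.1 b.2).1] using this
  · obtain ⟨T, hT, h0⟩ := T
    refine ⟨⟨tailNumbering hc T, isStandardNumbering_tailNumbering hc hT h0⟩,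
      Subtype.ext (funext fun b => Fin.ext ?_)⟩
    simp only [consNumbering_val, tailNumbering]
    split_ifs with hb
    · rw [← h0, show b = ⟨c, hc⟩ from Subtype.ext hb]
    · exact Nat.sub_add_cancel (hT.val_pos_of_ne hc h0 hb)

theorem card_isStandardNumbering_zero [DecidableRel r] (hc : c ∈ S) :
    Nat.card {T // IsStandardNumbering r S T ∧ (T ⟨c, hc⟩).val = 0} =
      if ∀ a ∈ S, ¬ r a c then Nat.card {T // IsStandardNumbering r (S.erase c) T} else 0 := by
  split_ifs with hmin
  · exact card_isStandardNumbering_zero_eq hc hmin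
  · obtain ⟨a, ha, hac⟩ : ∃ a ∈ S, r a c := by simpa using hmin
    refine Nat.card_eq_zero.2 (Or.inl ⟨fun ⟨T, hT, h0⟩ => ?_⟩)
    have := hT.2 ⟨a, ha⟩ ⟨c, hc⟩ hac
    rw [Fin.lt_def, h0] at this
    exact Nat.not_lt_zero _ this

/-- Remove the element numbered `0`, which is necessarily `r`-minimal. -/
theorem card_isStandardNumbering_eq_sum [DecidableRel r] (hS : S.Nonempty) :
    Nat.card {T // IsStandardNumbering r S T} =
      ∑ c ∈ S with ∀ a ∈ S, ¬ r a c, Nat.card {T // IsStandardNumbering r (S.erase c) T} := by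
  have hsigma : Nat.card (Σ c : S, {T // IsStandardNumbering r S T ∧ (T c).val = 0}) =
      Nat.card {T // IsStandardNumbering r S T} := by
    refine Nat.card_eq_of_bijective (fun x => ⟨x.2.1, x.2.2.1⟩) ⟨fun x y h => ?_, fun T => ?_⟩
    · have hT : x.2.1 = y.2.1 := congrArg Subtype.val h
      refine Sigma.subtype_ext (Subtype.ext ?_) hT
      exact x.2.2.1.eq_of_val_eq (x.2.2.2.trans (hT ▸ y.2.2.2).symm)
    · obtain ⟨c, hc⟩ := T.2.1.2 ⟨0, card_pos.2 hS⟩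
      exact ⟨⟨c, T.1, T.2, by rw [hc]⟩, rfl⟩
  rw [← hsigma, Nat.card_sigma, sum_filter, ← sum_coe_sort S]
  exact sum_congr rfl fun c _ => card_isStandardNumbering_zero c.2

end StandardNumbering

namespace StrictPartition

variable {lam mu nu : StrictPartition} {i k : ℕ} {c : ℕ × ℕ}

theorem part_succ (lam : StrictPartition) (i : ℕ) : lam.part (i + 1) = lam.parts.getD i 0 := by
  simp [part]

theorem part_succ_eq_getElem (h : i < lam.length) : lam.part (i + 1) = lam.parts[i] := by
  rw [part_succ]; exact List.getD_eq_getElem _ _ h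

theorem part_eq_zero (h : lam.length < i) : lam.part i = 0 :=
  List.getD_eq_default _ _ (by rw [← length]; omega)

theorem part_pos (h1 : 1 ≤ i) (h2 : i ≤ lam.length) : 0 < lam.part i := by
  obtain ⟨k, rfl⟩ : ∃ k, i = k + 1 := ⟨i - 1, by omega⟩
  rw [part_succ_eq_getElem (by omega)]
  exact lam.pos _ (List.getElem_mem _)

theorem part_pos_iff (h1 : 1 ≤ i) : 0 < lam.part i ↔ i ≤ lam.length :=
  ⟨fun h => by_contra fun hi => by rw [part_eq_zero (by omega)] at h; omega, part_pos h1⟩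

theorem part_lt_part {a b : ℕ} (ha : 1 ≤ a) (hab : a < b) (hb : b ≤ lam.length) :
    lam.part b < lam.part a := by
  obtain ⟨a, rfl⟩ : ∃ k, a = k + 1 := ⟨a - 1, by omega⟩
  obtain ⟨b, rfl⟩ : ∃ k, b = k + 1 := ⟨b - 1, by omega⟩
  rw [part_succ_eq_getElem (by omega), part_succ_eq_getElem (by omega)]
  exact List.pairwise_iff_getElem.1 lam.sorted a b _ _ (by omega)

theorem part_add_sub_le {a b : ℕ} (ha : 1 ≤ a) (hab : a ≤ b) (hb : b ≤ lam.length) :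
    lam.part b + (b - a) ≤ lam.part a := by
  induction b, hab using Nat.le_induction with
  | base => simp
  | succ b hab ih =>
    have := part_lt_part (lam := lam) (by omega) (by omega : b < b + 1) hb
    have := ih (by omega)
    omega

theorem part_le_part {a b : ℕ} (ha : 1 ≤ a) (hab : a ≤ b) : lam.part b ≤ lam.part a := by
  rcases le_or_gt b lam.length with hb | hb
  · have := part_add_sub_le ha hab hb; omega
  · rw [part_eq_zero hb]; omega

theorem part_le_size (lam : StrictPartition) (i : ℕ) : lam.part i ≤ lam.size := by
  rcases lt_or_ge (i - 1) lam.parts.length with h | h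
  · rw [part, List.getD_eq_getElem _ _ h]
    exact List.le_sum_of_mem (List.getElem_mem h)
  · rw [part, List.getD_eq_default _ _ h]; omega

theorem length_le_size (lam : StrictPartition) : lam.length ≤ lam.size :=
  List.length_le_sum_of_one_le _ lam.pos

theorem size_eq_sum_part (lam : StrictPartition) :
    lam.size = ∑ k ∈ Finset.range lam.length, lam.part (k + 1) := by
  rw [size, ← Fin.sum_univ_getElem, ← Fin.sum_univ_eq_sum_range]
  exact Finset.sum_congr rfl fun k _ => (part_succ_eq_getElem k.2).symm

theorem length_le_length_of_part_le (h : ∀ i, 1 ≤ i → lam.part i ≤ mu.part i) :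
    lam.length ≤ mu.length := by
  rcases Nat.eq_zero_or_pos lam.length with h0 | h0
  · omega
  · exact (part_pos_iff h0).1 ((part_pos h0 le_rfl).trans_le (h _ h0))

theorem ext_part (h : ∀ i, 1 ≤ i → lam.part i = mu.part i) : lam = mu := by
  have hlen : lam.length = mu.length :=
    le_antisymm (length_le_length_of_part_le fun i hi => (h i hi).le)
      (length_le_length_of_part_le fun i hi => (h i hi).ge)
  have hparts : lam.parts = mu.parts := List.ext_getElem hlen fun k h₁ h₂ => by
    rw [← part_succ_eq_getElem h₁, ← part_succ_eq_getElem (lam := mu) h₂, h _ (by omega)]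
  cases lam; cases mu; simpa using hparts

theorem le_of_part_le (h : ∀ i, 1 ≤ i → mu.part i ≤ lam.part i) : mu ≤ lam
  | 0 => h 1 le_rfl
  | i + 1 => h (i + 1) (by omega)

instance : PartialOrder StrictPartition where
  le mu lam := mu ≤ lam
  le_refl _ _ := le_rfl
  le_trans _ _ _ h₁ h₂ i := (h₁ i).trans (h₂ i)
  le_antisymm _ _ h₁ h₂ := ext_part fun i _ => le_antisymm (h₁ i) (h₂ i)

theorem length_le_length (h : mu ≤ lam) : mu.length ≤ lam.length :=
  length_le_length_of_part_le fun i _ => h i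

theorem mem_cells {b : ℕ × ℕ} :
    b ∈ lam.cells ↔ 1 ≤ b.1 ∧ b.1 < b.2 ∧ b.2 ≤ b.1 + lam.part b.1 := by
  rw [cells, Finset.mem_filter, Finset.mem_product, Finset.mem_range, Finset.mem_range]
  refine ⟨And.right, fun h => ⟨?_, h⟩⟩
  have := (part_pos_iff h.1).1 (by omega : 0 < lam.part b.1)
  have := lam.length_le_size
  have := lam.part_le_size b.1
  omega

theorem mem_cells_of_le {a b : ℕ × ℕ} (hb : b ∈ lam.cells) (ha : 1 ≤ a.1) (ha' : a.1 < a.2)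
    (h₁ : a.1 ≤ b.1) (h₂ : a.2 ≤ b.2) : a ∈ lam.cells := by
  rw [mem_cells] at hb ⊢
  have := part_add_sub_le (lam := lam) ha h₁ ((part_pos_iff hb.1).1 (by omega))
  omega

theorem cells_subset_cells_iff : mu.cells ⊆ lam.cells ↔ mu ≤ lam := by
  refine ⟨fun h => le_of_part_le fun i hi => ?_, fun h b hb => ?_⟩
  · rcases Nat.eq_zero_or_pos (mu.part i) with h0 | h0
    · omega
    · have := mem_cells.1 (h ((mem_cells (b := (i, i + mu.part i))).2 ⟨hi, by simpa, le_rfl⟩))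
      simp only at this
      omega
  · rw [mem_cells] at hb ⊢
    have := h b.1
    omega

theorem cells_injective : Function.Injective cells := fun _ _ h =>
  le_antisymm (cells_subset_cells_iff.1 h.le) (cells_subset_cells_iff.1 h.ge)

theorem card_cells (lam : StrictPartition) : lam.cells.card = lam.size := by
  have hrows : lam.cells = (Finset.range lam.length).biUnion fun k =>
      (Finset.Ioc (k + 1) (k + 1 + lam.part (k + 1))).image (Prod.mk (k + 1)) := by
    ext ⟨i, j⟩
    simp only [mem_cells, Finset.mem_biUnion, Finset.mem_range, Finset.mem_image,
      Finset.mem_Ioc, Prod.mk.injEq]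
    constructor
    · rintro ⟨hi, hij, hj⟩
      obtain ⟨k, rfl⟩ : ∃ k, i = k + 1 := ⟨i - 1, by omega⟩
      have := (part_pos_iff (lam := lam) hi).1 (by omega)
      exact ⟨k, by omega, j, ⟨hij, hj⟩, rfl, rfl⟩
    · rintro ⟨k, hk, j, hj, rfl, rfl⟩
      omega
  rw [hrows, Finset.card_biUnion, size_eq_sum_part]
  · refine Finset.sum_congr rfl fun k _ => ?_
    rw [Finset.card_image_of_injective _ (Prod.mk_right_injective _), Nat.card_Ioc]
    omega
  · intro k _ l _ hkl
    simp only [Function.onFun, Finset.disjoint_left, Finset.mem_image]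
    rintro _ ⟨j, -, rfl⟩ ⟨j', -, h⟩
    exact hkl (by simpa using (congrArg Prod.fst h).symm)

theorem finite_setOf_size_eq (s : ℕ) : {lam : StrictPartition | lam.size = s}.Finite := by
  refine Set.Finite.of_finite_image (f := cells) ?_ cells_injective.injOn
  refine (Finset.range (2 * s + 2) ×ˢ Finset.range (2 * s + 2)).powerset.finite_toSet.subset ?_
  rintro _ ⟨lam, rfl, rfl⟩
  have := lam.length_le_size
  simp only [Finset.coe_powerset, Set.mem_preimage, Set.mem_powerset_iff, Finset.coe_subset]
  exact (Finset.filter_subset _ _).trans (by gcongr <;> omega)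

theorem card_skewCells (h : mu ≤ lam) : (skewCells mu lam).card = lam.size - mu.size := by
  rw [skewCells, Finset.card_sdiff_of_subset (cells_subset_cells_iff.2 h), card_cells, card_cells]

theorem eq_of_le_of_size_eq (h : mu ≤ lam) (hs : lam.size = mu.size) : mu = lam :=
  cells_injective <| Finset.eq_of_subset_of_card_le (cells_subset_cells_iff.2 h)
    (by rw [card_cells, card_cells, hs])

theorem addBox_iff : AddBox mu nu ↔ ∃ c ∉ mu.cells, nu.cells = insert c mu.cells := by
  constructor
  · rintro ⟨hle, hs⟩
    obtain ⟨c, hc⟩ := Finset.card_eq_one.1 (by rw [card_skewCells hle]; omega)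
    have hsub := cells_subset_cells_iff.2 hle
    refine ⟨c, fun h => ?_, ?_⟩
    · simpa [← hc, skewCells, h] using Finset.mem_singleton_self c
    · rw [Finset.insert_eq, ← hc, skewCells, Finset.sdiff_union_of_subset hsub]
  · rintro ⟨c, hc, h⟩
    refine ⟨cells_subset_cells_iff.1 (h ▸ Finset.subset_insert c mu.cells), ?_⟩
    rw [← card_cells, h, Finset.card_insert_of_notMem hc, card_cells]

theorem AddBox.length_eq (h : AddBox mu nu) :
    nu.length = mu.length ∨ nu.length = mu.length + 1 := by
  obtain ⟨c, hc, hcells⟩ := addBox_iff.1 h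
  have hle := length_le_length h.1
  by_contra hlen
  set m := mu.length
  have hnew (k : ℕ) (hk : m < k) (hk' : k ≤ nu.length) : (k, k + 1) = c := by
    have := part_pos (lam := nu) (i := k) (by omega) hk'
    have hmem : (k, k + 1) ∈ nu.cells := mem_cells.2 ⟨by omega, by simp, by simp; omega⟩
    rw [hcells, Finset.mem_insert] at hmem
    refine hmem.resolve_right fun hmu => ?_
    have := (mem_cells.1 hmu).2.2
    simp only [part_eq_zero hk] at this
    omega
  have := (hnew (m + 1) (by omega) (by omega)).trans (hnew (m + 2) (by omega) (by omega)).symm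
  simp at this

def ofStrictAnti (p : ℕ → ℕ) (N : ℕ) (hpos : ∀ k, 1 ≤ k → k ≤ N → 0 < p k)
    (hlt : ∀ a b, 1 ≤ a → a < b → b ≤ N → p b < p a) : StrictPartition where
  parts := (List.range N).map fun k => p (k + 1)
  pos := by
    simp only [List.mem_map, List.mem_range]
    rintro _ ⟨k, hk, rfl⟩
    exact hpos _ (by omega) (by omega)
  sorted := List.pairwise_map.2 <| List.pairwise_lt_range.imp_of_mem fun _ hb hab =>
    hlt _ _ (by omega) (by omega) (by simp only [List.mem_range] at hb; omega)

theorem part_ofStrictAnti {p : ℕ → ℕ} {N : ℕ} {hpos hlt} (hi : 1 ≤ i) :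
    (ofStrictAnti p N hpos hlt).part i = if i ≤ N then p i else 0 := by
  obtain ⟨k, rfl⟩ : ∃ k, i = k + 1 := ⟨i - 1, by omega⟩
  rw [part_succ]
  split_ifs with hk
  · rw [List.getD_eq_getElem _ _ (by simp [ofStrictAnti]; omega)]
    simp [ofStrictAnti]
  · exact List.getD_eq_default _ _ (by simp [ofStrictAnti]; omega)

theorem exists_part_eq_update (hi : 1 ≤ i)
    (hrow : 1 < i → mu.part i + 2 ≤ mu.part (i - 1)) : ∃ nu : StrictPartition,
      ∀ k, 1 ≤ k → nu.part k = if k = i then mu.part i + 1 else mu.part k := by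
  have hi' : i ≤ mu.length + 1 := by
    by_contra h
    have := hrow (by omega)
    rw [part_eq_zero (i := i - 1) (by omega)] at this
    omega
  let p k := if k = i then mu.part i + 1 else mu.part k
  have hN : mu.length ≤ max mu.length i ∧ i ≤ max mu.length i := ⟨le_max_left .., le_max_right ..⟩
  have hpos (k : ℕ) (hk : 1 ≤ k) (hkN : k ≤ max mu.length i) : 0 < p k := by
    dsimp only [p]
    split_ifs with h
    · omega
    · exact part_pos hk (by omega)
  have hlt (a b : ℕ) (ha : 1 ≤ a) (hab : a < b) (hbN : b ≤ max mu.length i) : p b < p a := by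
    dsimp only [p]
    by_cases hb : b = i
    · have := part_le_part (lam := mu) ha (show a ≤ i - 1 by omega)
      have := hrow (by omega)
      rw [if_pos hb, if_neg (by omega)]
      omega
    by_cases ha' : a = i
    · have := part_le_part (lam := mu) ha (show a ≤ b by omega)
      rw [if_neg hb, if_pos ha', ← ha']
      omega
    rw [if_neg hb, if_neg ha']
    exact part_lt_part ha hab (by omega)
  refine ⟨ofStrictAnti p _ hpos hlt, fun k hk => ?_⟩
  rw [part_ofStrictAnti hk]
  by_cases hkN : k ≤ max mu.length i
  · rw [if_pos hkN]
  · rw [if_neg hkN, if_neg (by omega), part_eq_zero (by omega)]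

theorem exists_cells_eq_insert (hi : 1 ≤ i) (hrow : 1 < i → mu.part i + 2 ≤ mu.part (i - 1)) :
    ∃ nu : StrictPartition, nu.cells = insert (i, i + mu.part i + 1) mu.cells := by
  obtain ⟨nu, hnu⟩ := exists_part_eq_update hi hrow
  refine ⟨nu, Finset.ext fun ⟨a, b⟩ => ?_⟩
  rw [Finset.mem_insert, mem_cells, mem_cells]
  simp only [Prod.mk.injEq]
  rcases Nat.eq_zero_or_pos a with ha | ha
  · omega
  rw [hnu a ha]
  by_cases hai : a = i
  · subst hai
    split_ifs <;> omega
  · rw [if_neg hai]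
    omega

def CellPrecedes (a b : ℕ × ℕ) : Prop := a.1 = b.1 ∧ a.2 < b.2 ∨ a.2 = b.2 ∧ a.1 < b.1

instance : DecidableRel CellPrecedes := fun _ _ => inferInstanceAs (Decidable (_ ∨ _))

theorem fskew_eq_card (mu lam : StrictPartition) :
    fskew mu lam = Nat.card {T // IsStandardNumbering CellPrecedes (skewCells mu lam) T} :=
  Nat.card_congr <| Equiv.subtypeEquivRight fun _ => and_congr_right fun _ => by
    simp only [CellPrecedes, or_imp, and_imp, forall_and]

theorem fskew_self (mu : StrictPartition) : fskew mu mu = 1 := by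
  rw [fskew_eq_card, skewCells, Finset.sdiff_self, card_isStandardNumbering_empty]

theorem skewCells_eq_singleton (hc : c ∉ mu.cells) (h : nu.cells = insert c mu.cells) :
    skewCells mu nu = {c} := by
  rw [skewCells, h, Finset.insert_sdiff_cancel hc]

theorem skewCells_eq_erase (h : nu.cells = insert c mu.cells) :
    skewCells nu lam = (skewCells mu lam).erase c := by
  rw [skewCells, skewCells, h, Finset.sdiff_insert]

theorem exists_cells_eq_insert_of_minimal (hc : c ∈ skewCells mu lam)
    (hmin : ∀ a ∈ skewCells mu lam, ¬ CellPrecedes a c) :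
    ∃ nu : StrictPartition, nu.cells = insert c mu.cells := by
  obtain ⟨i, j⟩ := c
  obtain ⟨hlam, hmu⟩ := Finset.mem_sdiff.1 hc
  obtain ⟨hi, hij, hjl⟩ : 1 ≤ i ∧ i < j ∧ j ≤ i + lam.part i := mem_cells.1 hlam
  have hmu' : i + mu.part i < j := by rw [mem_cells] at hmu; simp only at hmu; omega
  -- otherwise `(i, j - 1)` is a cell of `λ/μ` preceding `c`
  have hj : j = i + mu.part i + 1 := by
    by_contra hne
    refine hmin (i, j - 1) (Finset.mem_sdiff.2 ⟨mem_cells_of_le hlam ?_ ?_ ?_ ?_, ?_⟩)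
      (Or.inl ⟨rfl, ?_⟩) <;> simp only [mem_cells] <;> omega
  -- otherwise `(i - 1, j)` is a cell of `λ/μ` preceding `c`
  have hrow (hi' : 1 < i) : mu.part i + 2 ≤ mu.part (i - 1) := by
    by_cases habove : (i - 1, j) ∈ mu.cells
    · rw [mem_cells] at habove; simp only at habove; omega
    · refine absurd (Or.inr ⟨rfl, ?_⟩) (hmin (i - 1, j) (Finset.mem_sdiff.2
        ⟨mem_cells_of_le hlam ?_ ?_ ?_ le_rfl, habove⟩)) <;> simp only <;> omega
  exact hj ▸ exists_cells_eq_insert hi hrow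

theorem not_cellPrecedes_of_cells_eq_insert (h : nu.cells = insert c mu.cells)
    {a : ℕ × ℕ} (ha : a ∈ skewCells mu lam) : ¬ CellPrecedes a c := by
  intro hac
  obtain ⟨hlam, hmu⟩ := Finset.mem_sdiff.1 ha
  obtain ⟨ha1, ha2, -⟩ := mem_cells.1 hlam
  have hnu : a ∈ nu.cells := mem_cells_of_le (h ▸ Finset.mem_insert_self c mu.cells) ha1 ha2
    (by rcases hac with h | h <;> omega) (by rcases hac with h | h <;> omega)
  rcases Finset.mem_insert.1 (h ▸ hnu) with rfl | h'
  · rcases hac with h | h <;> omega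
  · exact hmu h'

noncomputable def above (mu : StrictPartition) (k : ℕ) : Finset StrictPartition :=
  ((finite_setOf_size_eq (mu.size + k)).subset fun _ h => h.2 :
    {lam : StrictPartition | mu ≤ lam ∧ lam.size = mu.size + k}.Finite).toFinset

theorem coe_above (mu : StrictPartition) (k : ℕ) :
    (above mu k : Set StrictPartition) = {lam | mu ≤ lam ∧ lam.size = mu.size + k} :=
  Set.Finite.coe_toFinset _

theorem mem_above : lam ∈ above mu k ↔ mu ≤ lam ∧ lam.size = mu.size + k :=
  Set.Finite.mem_toFinset _

theorem mem_above_one : nu ∈ above mu 1 ↔ AddBox mu nu := mem_above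

theorem above_zero (mu : StrictPartition) : above mu 0 = {mu} := by
  ext lam
  rw [mem_above, Finset.mem_singleton]
  exact ⟨fun h => (eq_of_le_of_size_eq h.1 h.2).symm, fun h => h ▸ ⟨le_rfl, rfl⟩⟩

open Classical in
theorem filter_minimal_skewCells_eq_biUnion (hml : mu ≤ lam) :
    {c ∈ skewCells mu lam | ∀ a ∈ skewCells mu lam, ¬ CellPrecedes a c} =
      {nu ∈ above mu 1 | nu ≤ lam}.biUnion (skewCells mu) := by
  ext c
  simp only [Finset.mem_filter, Finset.mem_biUnion, mem_above_one]
  constructor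
  · rintro ⟨hc, hmin⟩
    obtain ⟨hcl, hcm⟩ := Finset.mem_sdiff.1 hc
    obtain ⟨nu, hnu⟩ := exists_cells_eq_insert_of_minimal hc hmin
    refine ⟨nu, ⟨addBox_iff.2 ⟨c, hcm, hnu⟩, cells_subset_cells_iff.1 ?_⟩, ?_⟩
    · exact hnu ▸ Finset.insert_subset hcl (cells_subset_cells_iff.2 hml)
    · exact skewCells_eq_singleton hcm hnu ▸ Finset.mem_singleton_self c
  · rintro ⟨nu, ⟨hadd, hnl⟩, hc⟩
    obtain ⟨c', hc', hnu⟩ := addBox_iff.1 hadd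
    obtain rfl := Finset.mem_singleton.1 (skewCells_eq_singleton hc' hnu ▸ hc)
    refine ⟨Finset.mem_sdiff.2 ⟨cells_subset_cells_iff.2 hnl ?_, hc'⟩,
      fun a ha => not_cellPrecedes_of_cells_eq_insert hnu ha⟩
    exact hnu ▸ Finset.mem_insert_self c mu.cells

theorem pairwiseDisjoint_skewCells_above_one :
    (above mu 1 : Set StrictPartition).PairwiseDisjoint (skewCells mu) := by
  intro nu hnu nu' hnu' hne
  obtain ⟨c, hc, hcells⟩ := addBox_iff.1 (mem_above_one.1 hnu)
  obtain ⟨c', hc', hcells'⟩ := addBox_iff.1 (mem_above_one.1 hnu')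
  rw [Function.onFun, skewCells_eq_singleton hc hcells, skewCells_eq_singleton hc' hcells',
    Finset.disjoint_singleton]
  rintro rfl
  exact hne (cells_injective (hcells.trans hcells'.symm))

open Classical in
theorem fskew_eq_sum (hml : mu ≤ lam) (hs : mu.size < lam.size) :
    fskew mu lam = ∑ nu ∈ above mu 1 with nu ≤ lam, fskew nu lam := by
  have hS : (skewCells mu lam).Nonempty := Finset.card_pos.1 (by rw [card_skewCells hml]; omega)
  have hdisj := pairwiseDisjoint_skewCells_above_one (mu := mu).subset
    (Finset.coe_subset.2 (Finset.filter_subset (· ≤ lam) _))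
  rw [fskew_eq_card, card_isStandardNumbering_eq_sum hS, filter_minimal_skewCells_eq_biUnion hml,
    Finset.sum_biUnion hdisj]
  refine Finset.sum_congr rfl fun nu hnu => ?_
  obtain ⟨c, hc, hcells⟩ := addBox_iff.1 (mem_above_one.1 (Finset.mem_filter.1 hnu).1)
  rw [skewCells_eq_singleton hc hcells, Finset.sum_singleton, fskew_eq_card,
    skewCells_eq_erase hcells]

noncomputable def weight (mu lam : StrictPartition) : ℚ :=
  2 ^ ((lam.size : ℤ) - mu.size - lam.length + mu.length)

theorem fPrime_eq (mu lam : StrictPartition) : fPrime mu lam = weight mu lam * fskew mu lam := rfl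

theorem weight_mul_weight (mu nu lam : StrictPartition) :
    weight mu nu * weight nu lam = weight mu lam := by
  rw [weight, weight, weight, ← zpow_add₀ two_ne_zero]
  ring_nf

theorem AddBox.weight_eq (h : AddBox mu nu) :
    weight mu nu = if nu.length = mu.length then 2 else 1 := by
  rcases h.length_eq with hl | hl <;> simp [weight, hl, h.2]

theorem fPrime_self (mu : StrictPartition) : fPrime mu mu = 1 := by
  simp [fPrime_eq, weight, fskew_self]

open Classical in
theorem fPrime_eq_sum (hml : mu ≤ lam) (hs : mu.size < lam.size) :
    fPrime mu lam = ∑ nu ∈ above mu 1 with nu ≤ lam, weight mu nu * fPrime nu lam := by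
  simp_rw [fPrime_eq, ← mul_assoc, weight_mul_weight, ← Finset.mul_sum, fskew_eq_sum hml hs]
  push_cast
  rfl

noncomputable def up : Module.End ℚ (StrictPartition → ℚ) :=
  LinearMap.pi fun mu => ∑ nu ∈ above mu 1, weight mu nu • LinearMap.proj nu

theorem up_apply (g : StrictPartition → ℚ) (mu : StrictPartition) :
    up g mu = ∑ nu ∈ above mu 1, weight mu nu * g nu := by
  simp [up]

theorem D_eq_up_sub_one : D = ⇑(up - 1) := by
  funext g mu
  have hset (p : StrictPartition → Prop) [DecidablePred p] :
      {nu | AddBox mu nu ∧ p nu} = ↑({nu ∈ above mu 1 | p nu}) := by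
    ext; simp [mem_above_one]
  have hlt : {nu ∈ above mu 1 | mu.length < nu.length} =
      {nu ∈ above mu 1 | ¬ nu.length = mu.length} :=
    Finset.filter_congr fun nu hnu => by
      rcases (mem_above_one.1 hnu).length_eq with h | h <;> omega
  rw [D, hset, hset, finsum_mem_coe_finset, finsum_mem_coe_finset, LinearMap.sub_apply,
    Module.End.one_apply, Pi.sub_apply, up_apply, hlt, Finset.mul_sum,
    ← Finset.sum_filter_not_add_sum_filter (above mu 1) (fun nu => nu.length = mu.length)
      (fun nu => weight mu nu * g nu)]
  congr 2 <;> refine Finset.sum_congr rfl fun nu hnu => ?_ <;>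
    obtain ⟨hnu, hl⟩ := Finset.mem_filter.1 hnu <;>
    simp [(mem_above_one.1 hnu).weight_eq, hl]

theorem iterate_up_apply (g : StrictPartition → ℚ) (k : ℕ) (mu : StrictPartition) :
    (up^[k] g) mu = ∑ lam ∈ above mu k, fPrime mu lam * g lam := by
  classical
  induction k generalizing mu with
  | zero => simp [above_zero, fPrime_self]
  | succ k ih =>
    rw [Function.iterate_succ_apply', up_apply]
    simp_rw [ih, Finset.mul_sum, ← mul_assoc]
    rw [Finset.sum_comm' (β := ℚ) (t' := above mu (k + 1))
      (s' := fun lam => {nu ∈ above mu 1 | nu ≤ lam})]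
    · refine Finset.sum_congr rfl fun lam hlam => ?_
      obtain ⟨hml, hs⟩ := mem_above.1 hlam
      rw [fPrime_eq_sum hml (by omega), Finset.sum_mul]
    · intro nu lam
      simp only [Finset.mem_filter, mem_above]
      constructor
      · rintro ⟨⟨hmn, hs⟩, hnl, hs'⟩
        exact ⟨⟨⟨hmn, hs⟩, hnl⟩, hmn.trans hnl, by omega⟩
      · rintro ⟨⟨⟨hmn, hs⟩, hnl⟩, -, hs'⟩
        exact ⟨⟨hmn, hs⟩, hnl, by omega⟩

end StrictPartition

open StrictPartition in
/-- Theorem 2.3, identity (6). -/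
theorem statement6 (g : StrictPartition → ℚ) (mu : StrictPartition) (n : ℕ) :
    (D^[n] g) mu =
      ∑ k ∈ Finset.range (n + 1), (-1 : ℚ) ^ (n + k) * (n.choose k : ℚ) *
        ∑ᶠ lam ∈ {lam : StrictPartition | mu ≤ lam ∧ lam.size = mu.size + k},
          (2 : ℚ) ^ ((lam.size : ℤ) - mu.size - lam.length + mu.length) * fskew mu lam *
            g lam := by
  rw [D_eq_up_sub_one, ← Module.End.pow_apply, Module.End.sub_one_pow_apply, Finset.sum_apply]
  refine Finset.sum_congr rfl fun k _ => ?_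
  rw [Pi.smul_apply, smul_eq_mul, Module.End.pow_apply, iterate_up_apply, ← coe_above,
    finsum_mem_coe_finset]
  rfl
end

section
/- Let k be a nonnegative integer. Then there exist rational numbers ξ_ν, indexed by the partitions ν with |ν| ≤ k and depending only on k and ν, such that for every m ≥ 0 and all pairwise distinct complex numbers a_0, a_1, ..., a_m and complex numbers b_1, ..., b_m: Σ_{i=0}^{m} [ Π_{j=1}^{m} (a_i − b_j) / Π_{0≤j≤m, j≠i} (a_i − a_j) ] · a_i^k = Σ_{|ν| ≤ k} ξ_ν q_ν({a_i}, {b_i}). -/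
/-!
The numbers `cᵢ = ∏ⱼ (aᵢ - bⱼ) / ∏_{j ≠ i} (aᵢ - aⱼ)` are the coefficients of Lagrange
interpolation of `∏ⱼ (x - bⱼ)` at the nodes `aᵢ`; reversing that identity gives the partial
fraction decomposition `∏ⱼ (1 - bⱼ t) / ∏ᵢ (1 - aᵢ t) = ∑ᵢ cᵢ / (1 - aᵢ t)`, so the left-hand side
`S_k = ∑ᵢ cᵢ aᵢ^k` is the `t^k`-coefficient of this series `H`. The logarithmic derivative of `H`
is `∑ᵣ q_{r+1} t^r`, and comparing coefficients in `H' = H · ∑ᵣ q_{r+1} t^r` gives Newton's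
recursion `(k + 1) S_{k+1} = ∑_{u ≤ k} q_{u+1} S_{k-u}` with `S_0 = 1`. Hence `S_k` is the value at
`(q_r)_r` of a universal polynomial over `ℚ` in variables `X_r` (`r ≥ 1`), homogeneous of degree `k`
when `X_r` has weight `r`; its coefficients are the `ξ_ν`.
-/

open Finset

theorem Derivation.apply_prod_of_apply_eq_mul {R A ι : Type*} [CommSemiring R] [CommSemiring A]
    [Algebra R A] (D : Derivation R A A) (s : Finset ι) (f u : ι → A)
    (h : ∀ i ∈ s, D (f i) = f i * u i) :
    D (∏ i ∈ s, f i) = (∏ i ∈ s, f i) * ∑ i ∈ s, u i := by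
  classical
  induction s using Finset.induction_on with
  | empty => simp
  | insert i s hi ih =>
    rw [prod_insert hi, sum_insert hi, D.leibniz, smul_eq_mul, smul_eq_mul,
      ih fun j hj => h j (mem_insert_of_mem hj), h i (mem_insert_self i s)]
    ring

def residue {K : Type*} [Field K] {m : ℕ} (a : Fin (m + 1) → K) (b : Fin m → K)
    (i : Fin (m + 1)) : K :=
  (∏ j, (a i - b j)) / ∏ j ∈ univ.erase i, (a i - a j)

namespace PowerSeries

variable {K : Type*} [Field K]

theorem mk_pow_mul_one_sub_C_mul_X (x : K) : mk (x ^ ·) * (1 - C x * X) = 1 := by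
  have h : rescale x (mk 1 * (1 - X)) = 1 := by rw [mk_one_mul_one_sub_eq_one, map_one]
  simpa only [map_mul, map_sub, map_one, rescale_X, rescale_mk, Pi.one_apply, mul_one] using h

theorem coeff_inv_one_sub_C_mul_X (x : K) (n : ℕ) : coeff n (1 - C x * X : K⟦X⟧)⁻¹ = x ^ n := by
  rw [(PowerSeries.inv_eq_iff_mul_eq_one (by simp)).mpr (mk_pow_mul_one_sub_C_mul_X x), coeff_mk]

theorem derivative_prod_one_sub_C_mul_X {ι : Type*} (s : Finset ι) (x : ι → K) :
    d⁄dX K (∏ i ∈ s, (1 - C (x i) * X)) =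
      -(∏ i ∈ s, (1 - C (x i) * X)) * ∑ i ∈ s, C (x i) * (1 - C (x i) * X)⁻¹ := by
  rw [neg_mul, ← mul_neg, ← sum_neg_distrib]
  refine (d⁄dX K).apply_prod_of_apply_eq_mul s _ _ fun i _ => ?_
  rw [mul_neg, mul_left_comm, PowerSeries.mul_inv_cancel _ (by simp)]
  simp

theorem derivative_prod_mul_inv_prod {ι κ : Type*} (s : Finset ι) (t : Finset κ) (x : ι → K)
    (y : κ → K) :
    d⁄dX K ((∏ j ∈ t, (1 - C (y j) * X)) * (∏ i ∈ s, (1 - C (x i) * X))⁻¹) =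
      (∏ j ∈ t, (1 - C (y j) * X)) * (∏ i ∈ s, (1 - C (x i) * X))⁻¹ *
        (∑ i ∈ s, C (x i) * (1 - C (x i) * X)⁻¹ - ∑ j ∈ t, C (y j) * (1 - C (y j) * X)⁻¹) := by
  have hF : (∏ i ∈ s, (1 - C (x i) * X))⁻¹ * ∏ i ∈ s, (1 - C (x i) * X) = 1 :=
    PowerSeries.inv_mul_cancel _ (by simp [map_prod])
  rw [Derivation.leibniz, derivative_inv', derivative_prod_one_sub_C_mul_X,
    derivative_prod_one_sub_C_mul_X, smul_eq_mul, smul_eq_mul]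
  linear_combination ((∏ j ∈ t, (1 - C (y j) * X)) * (∏ i ∈ s, (1 - C (x i) * X))⁻¹ *
    ∑ i ∈ s, C (x i) * (1 - C (x i) * X)⁻¹) * hF

end PowerSeries

namespace Polynomial

theorem reflect_prod_X_sub_C {R ι : Type*} [CommRing R] {N : ℕ} (s : Finset ι) (hs : #s = N)
    (x : ι → R) : reflect N (∏ i ∈ s, (X - C (x i))) = ∏ i ∈ s, (1 - C (x i) * X) := by
  classical
  subst hs
  induction s using Finset.induction_on with
  | empty => simp [reflect_one]
  | insert i s hi ih =>
    have hdeg : (∏ j ∈ s, (X - C (x j))).natDegree ≤ #s :=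
      (natDegree_prod_le _ _).trans <| by
        simpa using Finset.sum_le_card_nsmul s _ 1 fun j _ => natDegree_X_sub_C_le (x j)
    rw [prod_insert hi, prod_insert hi, card_insert_of_notMem hi, add_comm,
      reflect_mul _ _ (natDegree_X_sub_C_le (x i)) hdeg, ih, reflect_sub, reflect_C, reflect_one_X,
      pow_one]

theorem reflect_sum {R ι : Type*} [Semiring R] (N : ℕ) (s : Finset ι) (f : ι → R[X]) :
    reflect N (∑ i ∈ s, f i) = ∑ i ∈ s, reflect N (f i) :=
  map_sum (⟨⟨reflect N, reflect_zero⟩, fun f g => reflect_add f g N⟩ : R[X] →+ R[X]) f s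

variable {K : Type*} [Field K] {m : ℕ}

theorem prod_X_sub_C_eq_sum_residue_mul {a : Fin (m + 1) → K} (ha : Function.Injective a)
    (b : Fin m → K) :
    ∏ j, (X - C (b j)) = ∑ i, C (residue a b i) * ∏ p ∈ univ.erase i, (X - C (a p)) := by
  have hdeg : (∏ j, (X - C (b j))).degree < ((#(univ : Finset (Fin (m + 1))) : ℕ) : WithBot ℕ) := by
    simp only [degree_prod, degree_X_sub_C, sum_const, card_univ, Fintype.card_fin, nsmul_eq_mul,
      mul_one, Nat.cast_add, Nat.cast_one]
    exact_mod_cast m.lt_succ_self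
  rw [Lagrange.eq_interpolate ha.injOn hdeg, Lagrange.interpolate_apply]
  refine sum_congr rfl fun i _ => ?_
  simp only [Lagrange.basis, Lagrange.basisDivisor, prod_mul_distrib, ← map_prod, eval_prod,
    eval_sub, eval_X, eval_C, residue, div_eq_mul_inv, prod_inv_distrib, C_mul, mul_assoc]

theorem prod_one_sub_C_mul_X_eq_sum_residue_mul {a : Fin (m + 1) → K}
    (ha : Function.Injective a) (b : Fin m → K) :
    ∏ j, (1 - C (b j) * X) = ∑ i, C (residue a b i) * ∏ p ∈ univ.erase i, (1 - C (a p) * X) := by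
  have h := congrArg (reflect m) (prod_X_sub_C_eq_sum_residue_mul ha b)
  rw [reflect_sum, reflect_prod_X_sub_C _ (by simp)] at h
  rw [h]
  refine sum_congr rfl fun i _ => ?_
  rw [reflect_C_mul, reflect_prod_X_sub_C _ (by simp)]

end Polynomial

namespace PowerSeries

variable {K : Type*} [Field K] {m : ℕ} {a : Fin (m + 1) → K}

theorem sum_residue_mul_inv_eq (ha : Function.Injective a) (b : Fin m → K) :
    ∑ i, C (residue a b i) * (1 - C (a i) * X)⁻¹ =
      (∏ j, (1 - C (b j) * X)) * (∏ i, (1 - C (a i) * X))⁻¹ := by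
  have h := congrArg Polynomial.coeToPowerSeries.ringHom
    (Polynomial.prod_one_sub_C_mul_X_eq_sum_residue_mul ha b)
  simp only [map_prod, map_sum, map_mul, map_sub, map_one,
    Polynomial.coeToPowerSeries.ringHom_apply, Polynomial.coe_C, Polynomial.coe_X] at h
  rw [PowerSeries.eq_mul_inv_iff_mul_eq (by simp [map_prod]), sum_mul, h]
  refine sum_congr rfl fun i _ => ?_
  rw [← mul_prod_erase univ _ (mem_univ i), ← mul_assoc, mul_assoc _ _⁻¹,
    PowerSeries.inv_mul_cancel _ (by simp), mul_one]

theorem coeff_sum_C_mul_inv_one_sub_C_mul_X {ι : Type*} (s : Finset ι) (c x : ι → K) (n : ℕ) :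
    coeff n (∑ i ∈ s, C (c i) * (1 - C (x i) * X)⁻¹) = ∑ i ∈ s, c i * x i ^ n := by
  simp only [map_sum, coeff_C_mul, coeff_inv_one_sub_C_mul_X]

end PowerSeries

open PowerSeries in
theorem sum_residue_eq_one {K : Type*} [Field K] {m : ℕ} {a : Fin (m + 1) → K}
    (ha : Function.Injective a) (b : Fin m → K) : ∑ i, residue a b i = 1 := by
  have h := congrArg (coeff 0) (sum_residue_mul_inv_eq ha b)
  simpa [coeff_sum_C_mul_inv_one_sub_C_mul_X, map_prod] using h

def superPowerSum {K ι κ : Type*} [Field K] [Fintype ι] [Fintype κ] (a : ι → K) (b : κ → K)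
    (r : ℕ) : K :=
  ∑ i, a i ^ r - ∑ j, b j ^ r

open PowerSeries in
theorem newton_sum_residue_mul_pow {K : Type*} [Field K] {m : ℕ} {a : Fin (m + 1) → K}
    (ha : Function.Injective a) (b : Fin m → K) (k : ℕ) :
    (k + 1 : K) * ∑ i, residue a b i * a i ^ (k + 1) =
      ∑ u ∈ range (k + 1), superPowerSum a b (u + 1) * ∑ i, residue a b i * a i ^ (k - u) := by
  set H : K⟦X⟧ := ∑ i, C (residue a b i) * (1 - C (a i) * X)⁻¹
  set L : K⟦X⟧ := ∑ i, C (a i) * (1 - C (a i) * X)⁻¹ - ∑ j, C (b j) * (1 - C (b j) * X)⁻¹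
  have hH : d⁄dX K H = L * H := by
    rw [mul_comm, show H = _ from sum_residue_mul_inv_eq ha b, derivative_prod_mul_inv_prod]
  have hL (n : ℕ) : coeff n L = superPowerSum a b (n + 1) := by
    simp only [L, map_sub, coeff_sum_C_mul_inv_one_sub_C_mul_X, superPowerSum, pow_succ']
  have hH' (n : ℕ) : coeff n H = ∑ i, residue a b i * a i ^ n :=
    coeff_sum_C_mul_inv_one_sub_C_mul_X _ _ _ n
  have h := congrArg (coeff k) hH
  rw [coeff_derivative, coeff_mul, Nat.sum_antidiagonal_eq_sum_range_succ
    (fun i j => coeff i L * coeff j H)] at h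
  simpa only [hH', hL, mul_comm _ ((k : K) + 1)] using h

namespace MvPolynomial

theorem aeval_eq_finsum_toMultiset {σ S R : Type*} [DecidableEq σ] [CommSemiring S]
    [CommSemiring R] [Algebra S R] (p : MvPolynomial σ S) (q : σ → R) {T : Set (Multiset σ)}
    (hT : ∀ d ∈ p.support, Finsupp.toMultiset d ∈ T) :
    aeval q p = ∑ᶠ ν ∈ T, algebraMap S R (p.coeff (Multiset.toFinsupp ν)) * (ν.map q).prod := by
  rw [finsum_mem_eq_sum_of_subset _ (t := p.support.image Finsupp.toMultiset),
    sum_image fun d _ d' _ h => by simpa using congrArg Multiset.toFinsupp h, aeval_def, eval₂_eq]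
  · refine sum_congr rfl fun d _ => ?_
    rw [Finsupp.toMultiset_toFinsupp, Finsupp.toMultiset_map, Finsupp.prod_toMultiset,
      Finsupp.prod_mapDomain_index (fun _ => pow_zero _) (fun _ _ _ => pow_add _ _ _)]
    rfl
  · rintro ν ⟨-, hν⟩
    refine mem_image.mpr ⟨Multiset.toFinsupp ν, ?_, Multiset.toFinsupp_toMultiset ν⟩
    rw [mem_support_iff]
    rintro h
    simp [h] at hν
  · simpa [Set.subset_def] using hT

noncomputable def newtonPoly : ℕ → MvPolynomial ℕ ℚ
  | 0 => 1
  | k + 1 => ((k : ℚ) + 1)⁻¹ • ∑ u ∈ range (k + 1), X (u + 1) * newtonPoly (k - u)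

theorem eq_aeval_newtonPoly {R : Type*} [CommRing R] [Algebra ℚ R] {q S : ℕ → R} (h0 : S 0 = 1)
    (hS : ∀ k : ℕ, (k + 1 : R) * S (k + 1) = ∑ u ∈ range (k + 1), q (u + 1) * S (k - u))
    (k : ℕ) : S k = aeval q (newtonPoly k) := by
  induction k using newtonPoly.induct with
  | case1 => simp [newtonPoly, h0]
  | case2 k ih =>
    have hk : ((k : ℚ) + 1) • S (k + 1) = ∑ u ∈ range (k + 1), q (u + 1) * S (k - u) := by
      rw [Algebra.smul_def, map_add, map_natCast, map_one, hS]
    rw [← inv_smul_smul₀ (Nat.cast_add_one_ne_zero k : (k : ℚ) + 1 ≠ 0) (S (k + 1)), hk,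
      newtonPoly, map_smul, map_sum]
    simp only [map_mul, aeval_X, ih]

theorem newtonPoly_mem_supported (k : ℕ) : newtonPoly k ∈ supported ℚ {i | 0 < i} := by
  induction k using newtonPoly.induct with
  | case1 => rw [newtonPoly]; exact one_mem _
  | case2 k ih =>
    rw [newtonPoly]
    exact Subalgebra.smul_mem _ (sum_mem fun u _ =>
      mul_mem (X_mem_supported.mpr u.succ_pos) (ih u)) _

theorem isWeightedHomogeneous_newtonPoly (k : ℕ) :
    IsWeightedHomogeneous id (newtonPoly k) k := by
  induction k using newtonPoly.induct with
  | case1 => rw [newtonPoly]; exact isWeightedHomogeneous_one ℚ _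
  | case2 k ih =>
    rw [newtonPoly, smul_eq_C_mul]
    refine (IsWeightedHomogeneous.sum _ _ _ fun u hu => ?_).C_mul _
    have hdeg : u + 1 + (k - u) = k + 1 := by have := mem_range.mp hu; omega
    have h := (isWeightedHomogeneous_X ℚ id (u + 1)).mul (ih u)
    rwa [id, hdeg] at h

theorem mem_support_newtonPoly {k : ℕ} {d : ℕ →₀ ℕ} (hd : d ∈ (newtonPoly k).support) :
    (∀ p ∈ Finsupp.toMultiset d, 0 < p) ∧ (Finsupp.toMultiset d).sum = k := by
  constructor
  · intro p hp
    refine (mem_supported.mp (newtonPoly_mem_supported k)) ?_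
    exact (mem_vars_iff_mem_support p).mpr ⟨d, hd, (Finsupp.mem_toMultiset d p).mp hp⟩
  · rw [Finsupp.sum_toMultiset, ← isWeightedHomogeneous_newtonPoly k (mem_support_iff.mp hd)]
    rfl

end MvPolynomial

/-- Theorem 3.2: the coefficients `ξ_ν`, indexed by partitions `ν` (encoded as
multisets of positive parts) with `|ν| ≤ k`, depend only on `k` and `ν`; here
`q_ν({aᵢ},{bᵢ}) = ∏_j (∑ᵢ aᵢ^{ν_j} − ∑ᵢ bᵢ^{ν_j})`. -/
theorem statement10 (k : ℕ) :
    ∃ ξ : Multiset ℕ → ℚ,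
      ∀ (m : ℕ) (a : Fin (m + 1) → ℂ) (b : Fin m → ℂ), Function.Injective a →
        ∑ i, (∏ j, (a i - b j)) / (∏ j ∈ Finset.univ.erase i, (a i - a j)) * a i ^ k =
        ∑ᶠ ν ∈ {ν : Multiset ℕ | (∀ p ∈ ν, 0 < p) ∧ ν.sum ≤ k},
          (ξ ν : ℂ) * (ν.map (fun r => (∑ i, a i ^ r) - ∑ j, b j ^ r)).prod := by
  refine ⟨fun ν => (MvPolynomial.newtonPoly k).coeff (Multiset.toFinsupp ν), fun m a b ha => ?_⟩
  have h := MvPolynomial.eq_aeval_newtonPoly (S := fun n => ∑ i, residue a b i * a i ^ n)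
    (q := superPowerSum a b) (by simpa using sum_residue_eq_one ha b)
    (newton_sum_residue_mul_pow ha b) k
  rw [MvPolynomial.aeval_eq_finsum_toMultiset (T := {ν | (∀ p ∈ ν, 0 < p) ∧ ν.sum ≤ k}) _ _
    fun d hd => (MvPolynomial.mem_support_newtonPoly hd).imp_right le_of_eq] at h
  -- `h` is the goal up to unfolding `residue`, `superPowerSum` and `algebraMap ℚ ℂ = Rat.cast`
  exact h
end

section
/- For every m ≥ 0, all pairwise distinct complex numbers a_0, a_1, ..., a_m, and all complex numbers b_1, ..., b_m: Σ_{i=0}^{m} [ Π_{j=1}^{m} (a_i − b_j) / Π_{0≤j≤m, j≠i} (a_i − a_j) ] · a_i² = (q_1² + q_2)/2, where q_1 = Σ_{i=0}^{m} a_i − Σ_{i=1}^{m} b_i and q_2 = Σ_{i=0}^{m} a_i² − Σ_{i=1}^{m} b_i². -/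
/-!
For `g` of degree at most `m`, the sum `∑ᵢ g(aᵢ) / ∏_{j ≠ i} (aᵢ - aⱼ)` is the coefficient of `X ^ m`
in `g` (Lagrange interpolation). The polynomial `g = X² ∏ⱼ (X - bⱼ) - (X + c) ∏ᵢ (X - aᵢ)` with
`c = ∑ aᵢ - ∑ bⱼ` agrees with `X² ∏ⱼ (X - bⱼ)` at the nodes and has its two top coefficients
cancelled, so the sum is its coefficient of `X ^ m`, which the top three coefficients of the two
products (`1`, `-e₁`, `e₂ = (p₁² - p₂) / 2`) determine.
-/

open Polynomial Finset

-- Coefficients are read through `X ^ 2 * p` so that no index below the top needs a truncated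
-- subtraction such as `k - 1` or `#s - 2`.
theorem Polynomial.coeff_X_add_C_mul {R : Type*} [CommRing R] (p : R[X]) (c : R) (k : ℕ) :
    ((X + C c) * p).coeff k = (X ^ 2 * p).coeff (k + 1) + c * (X ^ 2 * p).coeff (k + 2) := by
  rw [add_mul, coeff_add, coeff_C_mul, coeff_X_pow_mul, pow_two, mul_assoc, coeff_X_mul]

namespace Lagrange

section CommRing

variable {R ι : Type*} [CommRing R] (s : Finset ι) (v : ι → R)

theorem natDegree_X_sq_mul_nodal [Nontrivial R] : (X ^ 2 * nodal s v).natDegree = #s + 2 := by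
  rw [(monic_X_pow 2).natDegree_mul nodal_monic, natDegree_X_pow, natDegree_nodal, add_comm]

theorem coeff_X_sq_mul_nodal_card_add_two : (X ^ 2 * nodal s v).coeff (#s + 2) = 1 := by
  nontriviality R
  rw [← natDegree_X_sq_mul_nodal s v]
  exact ((monic_X_pow 2).mul nodal_monic).coeff_natDegree

theorem coeff_X_sq_mul_nodal_card_add_one :
    (X ^ 2 * nodal s v).coeff (#s + 1) = -∑ i ∈ s, v i := by
  classical
  induction s using Finset.induction_on with
  | empty => simp
  | @insert a s ha ih =>
    rw [nodal_insert_eq_nodal ha, card_insert_of_notMem ha, sum_insert ha,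
      show X ^ 2 * ((X - C (v a)) * nodal s v) =
        X * (X ^ 2 * nodal s v) - C (v a) * (X ^ 2 * nodal s v) by ring,
      coeff_sub, coeff_X_mul, coeff_C_mul, ih, coeff_X_sq_mul_nodal_card_add_two]
    ring

theorem two_mul_coeff_X_sq_mul_nodal_card :
    2 * (X ^ 2 * nodal s v).coeff #s = (∑ i ∈ s, v i) ^ 2 - ∑ i ∈ s, v i ^ 2 := by
  classical
  induction s using Finset.induction_on with
  | empty => simp
  | @insert a s ha ih =>
    rw [nodal_insert_eq_nodal ha, card_insert_of_notMem ha, sum_insert ha, sum_insert ha,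
      show X ^ 2 * ((X - C (v a)) * nodal s v) =
        X * (X ^ 2 * nodal s v) - C (v a) * (X ^ 2 * nodal s v) by ring,
      coeff_sub, coeff_X_mul, coeff_C_mul, coeff_X_sq_mul_nodal_card_add_one]
    linear_combination ih

end CommRing

section Field

variable {F ι κ : Type*} [Field F] [DecidableEq ι]

theorem two_mul_sum_prod_sub_div_prod_sub_mul_sq {s : Finset ι} {t : Finset κ} {v : ι → F}
    (w : κ → F) (hvs : Set.InjOn v s) (hst : #s = #t + 1) :
    2 * ∑ i ∈ s, (∏ j ∈ t, (v i - w j)) / (∏ j ∈ s.erase i, (v i - v j)) * v i ^ 2 =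
      (∑ i ∈ s, v i - ∑ j ∈ t, w j) ^ 2 + (∑ i ∈ s, v i ^ 2 - ∑ j ∈ t, w j ^ 2) := by
  set c := ∑ i ∈ s, v i - ∑ j ∈ t, w j
  set g : F[X] := X ^ 2 * nodal t w - (X + C c) * nodal s v
  have hcoeff : ∀ k, g.coeff k = (X ^ 2 * nodal t w).coeff k -
      (X ^ 2 * nodal s v).coeff (k + 1) - c * (X ^ 2 * nodal s v).coeff (k + 2) := fun k => by
    rw [coeff_sub, coeff_X_add_C_mul]; ring
  have hdeg : g.degree < #s := by
    rw [degree_lt_iff_coeff_zero]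
    intro k hk
    have hF := natDegree_X_sq_mul_nodal t w
    have hH := natDegree_X_sq_mul_nodal s v
    rw [hcoeff]
    rcases (by omega : k = #t + 1 ∨ k = #t + 2 ∨ #t + 3 ≤ k) with rfl | rfl | hk
    · rw [show #t + 1 + 1 = #s + 1 by omega, show #t + 1 + 2 = #s + 2 by omega,
        coeff_X_sq_mul_nodal_card_add_one, coeff_X_sq_mul_nodal_card_add_one,
        coeff_X_sq_mul_nodal_card_add_two]
      ring
    · rw [show #t + 2 + 1 = #s + 2 by omega, coeff_X_sq_mul_nodal_card_add_two,
        coeff_X_sq_mul_nodal_card_add_two, coeff_eq_zero_of_natDegree_lt (by omega)]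
      ring
    · rw [coeff_eq_zero_of_natDegree_lt (p := X ^ 2 * nodal t w) (by omega),
        coeff_eq_zero_of_natDegree_lt (p := X ^ 2 * nodal s v) (by omega),
        coeff_eq_zero_of_natDegree_lt (p := X ^ 2 * nodal s v) (by omega)]
      ring
  have hsum : ∑ i ∈ s, (∏ j ∈ t, (v i - w j)) / (∏ j ∈ s.erase i, (v i - v j)) * v i ^ 2 =
      g.coeff #t := by
    rw [show #t = #s - 1 by omega, coeff_eq_sum hvs hdeg]
    refine sum_congr rfl fun i hi => ?_
    simp only [g, eval_sub, eval_mul, eval_nodal_at_node hi, mul_zero, sub_zero, eval_pow,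
      eval_X, eval_nodal]
    ring
  rw [hsum, hcoeff, show #t + 1 = #s by omega, show #t + 2 = #s + 1 by omega,
    coeff_X_sq_mul_nodal_card_add_one]
  linear_combination two_mul_coeff_X_sq_mul_nodal_card t w - two_mul_coeff_X_sq_mul_nodal_card s v

end Field

end Lagrange

/-- Identity (13). -/
theorem statement12 (m : ℕ) (a : Fin (m + 1) → ℂ) (b : Fin m → ℂ)
    (ha : Function.Injective a) :
    ∑ i, (∏ j, (a i - b j)) / (∏ j ∈ Finset.univ.erase i, (a i - a j)) * a i ^ 2 =
      (((∑ i, a i) - ∑ j, b j) ^ 2 + ((∑ i, a i ^ 2) - ∑ j, b j ^ 2)) / 2 := by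
  rw [eq_div_iff two_ne_zero, mul_comm]
  exact Lagrange.two_mul_sum_prod_sub_div_prod_sub_mul_sq b ha.injOn (by simp)
end
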